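/- Let S : ℝ^(d×d)_sym → ℝ^(d×d)_sym satisfy, for constants c > 0, h ≥ 0 and exponents 1 < s ≤ s_max with conjugates s', s'_max: c·S(ξ):ξ ≥ |ξ|^s + |S(ξ)|^(s') - h for all ξ. Fix θ ∈ (0,1) and define S^θ(ξ) := S(ξ) + θ·∇m(ξ) with m(ξ) = |ξ|^(s_max). Then there exist a constant c^θ > 0 and h^θ ≥ 0 (depending on c, h, θ, s_max) such that c^θ·S^θ(ξ):ξ ≥ |ξ|^(s_max) + |S^θ(ξ)|^(s'_max) - h^θ for all ξ. -/

import Mathlib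

open RealInnerProductSpace

/-!
Since `∇m(ξ) = s_max |ξ|^(s_max - 2) ξ`, we have `∇m(ξ) : ξ = s_max |ξ|^s_max` and, because
`(s_max - 1) s'_max = s_max`, also `|∇m(ξ)|^s'_max = s_max^s'_max |ξ|^s_max`. So the term `θ ∇m`
supplies the coercivity in `|ξ|^s_max` and controls its own contribution to `|S^θ(ξ)|^s'_max`.
The contribution of `S` is split off by `|a + b|^q ≤ 2^(q-1) (|a|^q + |b|^q)`; since `s'_max ≤ s'`,
it is bounded by `|S(ξ)|^s' + 1`, which the coercivity of `S` controls.
-/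

theorem Real.HolderConjugate.conj_le_conj_of_le {p q p' q' : ℝ} (h : p.HolderConjugate q)
    (h' : p'.HolderConjugate q') (hpp' : p ≤ p') : q' ≤ q := by
  have hinv : q⁻¹ ≤ q'⁻¹ := by
    rw [← h.one_sub_inv, ← h'.one_sub_inv]
    linarith [inv_anti₀ h.pos hpp']
  exact (inv_le_inv₀ h.symm.pos h'.symm.pos).1 hinv

theorem Real.rpow_le_rpow_add_one {x q r : ℝ} (hx : 0 ≤ x) (hq : 0 ≤ q) (hqr : q ≤ r) :
    x ^ q ≤ x ^ r + 1 := by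
  rcases le_total x 1 with hx1 | hx1
  · linarith [Real.rpow_le_one hx hx1 hq, Real.rpow_nonneg hx r]
  · linarith [Real.rpow_le_rpow_of_exponent_le hx1 hqr]

theorem norm_add_rpow_le {E : Type*} [SeminormedAddCommGroup E] (x y : E) {q : ℝ} (hq : 1 ≤ q) :
    ‖x + y‖ ^ q ≤ 2 ^ (q - 1) * (‖x‖ ^ q + ‖y‖ ^ q) :=
  calc ‖x + y‖ ^ q ≤ (‖x‖ + ‖y‖) ^ q :=
        Real.rpow_le_rpow (norm_nonneg _) (norm_add_le x y) (by linarith)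
    _ ≤ 2 ^ (q - 1) * (‖x‖ ^ q + ‖y‖ ^ q) := by
        exact_mod_cast NNReal.rpow_add_le_mul_rpow_add_rpow ‖x‖₊ ‖y‖₊ hq

section

variable {V : Type*} [NormedAddCommGroup V] [InnerProductSpace ℝ V]

theorem exists_coercive_add {S G : V → V} {c h r p q a b : ℝ} (hc : 0 < c) (hh : 0 ≤ h)
    (hq : 1 ≤ q) (hqr : q ≤ r) (ha : 0 < a) (hb : 0 ≤ b)
    (hS : ∀ ξ, ‖S ξ‖ ^ r - h ≤ c * ⟪S ξ, ξ⟫)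
    (hG_inner : ∀ ξ, a * ‖ξ‖ ^ p ≤ ⟪G ξ, ξ⟫)
    (hG_norm : ∀ ξ, ‖G ξ‖ ^ q ≤ b * ‖ξ‖ ^ p) :
    ∃ c', 0 < c' ∧ ∃ h', 0 ≤ h' ∧
      ∀ ξ, ‖ξ‖ ^ p + ‖S ξ + G ξ‖ ^ q - h' ≤ c' * ⟪S ξ + G ξ, ξ⟫ := by
  set C : ℝ := 2 ^ (q - 1)
  have hC : 0 < C := by positivity
  obtain ⟨K, hK⟩ : ∃ K : ℝ, K = C + (1 + C * b) / (c * a) := ⟨_, rfl⟩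
  have hCK : C ≤ K := by rw [hK]; linarith [show 0 ≤ (1 + C * b) / (c * a) by positivity]
  have hK0 : 0 < K := hC.trans_le hCK
  have hKca : 1 + C * b ≤ K * c * a := by
    rw [hK, mul_assoc, add_mul, div_mul_cancel₀ _ (by positivity)]
    linarith [mul_pos hC (mul_pos hc ha)]
  refine ⟨K * c, by positivity, K * (1 + h), by positivity, fun ξ => ?_⟩
  have hSr : 0 ≤ ‖S ξ‖ ^ r := by positivity
  have hξp : 0 ≤ ‖ξ‖ ^ p := by positivity
  have hSG : ‖S ξ + G ξ‖ ^ q ≤ C * (‖S ξ‖ ^ r + 1) + C * b * ‖ξ‖ ^ p :=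
    calc ‖S ξ + G ξ‖ ^ q ≤ C * (‖S ξ‖ ^ q + ‖G ξ‖ ^ q) := norm_add_rpow_le _ _ hq
      _ ≤ C * (‖S ξ‖ ^ r + 1 + b * ‖ξ‖ ^ p) := by
        gcongr
        · exact Real.rpow_le_rpow_add_one (norm_nonneg _) (by linarith) hqr
        · exact hG_norm ξ
      _ = C * (‖S ξ‖ ^ r + 1) + C * b * ‖ξ‖ ^ p := by ring
  have hinner : K * (‖S ξ‖ ^ r - h) + K * c * (a * ‖ξ‖ ^ p) ≤ K * c * ⟪S ξ + G ξ, ξ⟫ := by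
    rw [inner_add_left, mul_add, mul_assoc K c ⟪S ξ, ξ⟫]
    exact add_le_add (mul_le_mul_of_nonneg_left (hS ξ) hK0.le)
      (mul_le_mul_of_nonneg_left (hG_inner ξ) (by positivity))
  linarith [mul_le_mul_of_nonneg_right hCK hSr, mul_le_mul_of_nonneg_right hKca hξp]

variable [CompleteSpace V]

theorem gradient_norm_rpow {p : ℝ} (hp : 1 < p) (ξ : V) :
    gradient (fun ζ : V => ‖ζ‖ ^ p) ξ = (p * ‖ξ‖ ^ (p - 2)) • ξ := by
  refine HasGradientAt.gradient (hasGradientAt_iff_hasFDerivAt.2 ?_)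
  rw [map_smul]
  exact hasFDerivAt_norm_rpow ξ hp

theorem inner_gradient_norm_rpow_self {p : ℝ} (hp : 1 < p) (ξ : V) :
    ⟪gradient (fun ζ : V => ‖ζ‖ ^ p) ξ, ξ⟫ = p * ‖ξ‖ ^ p := by
  rw [gradient_norm_rpow hp, real_inner_smul_left, real_inner_self_eq_norm_sq, mul_assoc,
    ← Real.rpow_add_natCast' (norm_nonneg ξ) (by push_cast; linarith)]
  norm_num

theorem norm_gradient_norm_rpow {p : ℝ} (hp : 1 < p) (ξ : V) :
    ‖gradient (fun ζ : V => ‖ζ‖ ^ p) ξ‖ = p * ‖ξ‖ ^ (p - 1) := by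
  rw [gradient_norm_rpow hp, norm_smul, Real.norm_of_nonneg (by positivity), mul_assoc,
    ← Real.rpow_add_one' (norm_nonneg ξ) (by linarith)]
  ring_nf

theorem norm_gradient_norm_rpow_rpow_conj {p q : ℝ} (hpq : p.HolderConjugate q) (ξ : V) :
    ‖gradient (fun ζ : V => ‖ζ‖ ^ p) ξ‖ ^ q = p ^ q * ‖ξ‖ ^ p := by
  rw [norm_gradient_norm_rpow hpq.lt, Real.mul_rpow hpq.nonneg (by positivity),
    ← Real.rpow_mul (norm_nonneg ξ), hpq.sub_one_mul_conj]

end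

/-- Coercivity of the regularized stress tensor `S^θ = S + θ ∇m`, `m(ξ) = |ξ|^{s_max}`:
if `c S(ξ):ξ ≥ |ξ|^s + |S(ξ)|^{s'} - h`, then there are `c^θ > 0` and `h^θ ≥ 0`
with `c^θ S^θ(ξ):ξ ≥ |ξ|^{s_max} + |S^θ(ξ)|^{s'_max} - h^θ`. -/
theorem stmt_6 {V : Type*} [NormedAddCommGroup V] [InnerProductSpace ℝ V]
    [CompleteSpace V]
    (S : V → V) (c h s s_max s' s'_max : ℝ)
    (hc : 0 < c) (hh : 0 ≤ h) (hs1 : 1 < s) (hss : s ≤ s_max)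
    (hs' : s' = s / (s - 1)) (hs'max : s'_max = s_max / (s_max - 1))
    (hcoer : ∀ ξ : V, ‖ξ‖ ^ s + ‖S ξ‖ ^ s' - h ≤ c * ⟪S ξ, ξ⟫)
    (θ : ℝ) (hθ : θ ∈ Set.Ioo (0 : ℝ) 1)
    (Sθ : V → V)
    (hSθ : Sθ = fun ξ => S ξ + θ • gradient (fun ζ => ‖ζ‖ ^ s_max) ξ) :
    ∃ cθ : ℝ, 0 < cθ ∧ ∃ hθ' : ℝ, 0 ≤ hθ' ∧
      ∀ ξ : V, ‖ξ‖ ^ s_max + ‖Sθ ξ‖ ^ s'_max - hθ' ≤ cθ * ⟪Sθ ξ, ξ⟫ := by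
  have hp : 1 < s_max := hs1.trans_le hss
  have hss' : s.HolderConjugate s' := (Real.holderConjugate_iff_eq_conjExponent hs1).2 hs'
  have hpq : s_max.HolderConjugate s'_max := (Real.holderConjugate_iff_eq_conjExponent hp).2 hs'max
  obtain ⟨hθ0, -⟩ := hθ
  subst hSθ
  refine exists_coercive_add hc hh hpq.symm.lt.le (hss'.conj_le_conj_of_le hpq hss)
    (by positivity : 0 < θ * s_max) (by positivity : 0 ≤ θ ^ s'_max * s_max ^ s'_max)
    (fun ξ => by linarith [hcoer ξ, Real.rpow_nonneg (norm_nonneg ξ) s]) (fun ξ => ?_) (fun ξ => ?_)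
  · rw [real_inner_smul_left, inner_gradient_norm_rpow_self hp, mul_assoc]
  · rw [norm_smul, Real.mul_rpow (norm_nonneg θ) (norm_nonneg _),
      norm_gradient_norm_rpow_rpow_conj hpq, Real.norm_of_nonneg hθ0.le, mul_assoc]
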